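/- arXiv:1908.07809 — 2 statements merged into one kernel-verified Lean document; each statement's English description precedes it below -/
import Mathlib

section
/- Let 𝓛 be a tame EALA with root system R, and let σ ∈ R⁰, α ∈ R× with α + σ ∈ R× and α − σ ∈ R×. Then ([𝓛_{α+σ}, 𝓛_{−α}], [𝓛_{α−σ}, 𝓛_{−α}]) ≠ 0, i.e., the form does not vanish on the pairing of these two subspaces of 𝓗. -/
noncomputable section

variable {L : Type*} [LieRing L] [LieAlgebra ℂ L]

/-- The root space of `α : 𝓗* ` in `L` relative to the subalgebra `H`. -/
def rootSpace' (H : LieSubalgebra ℂ L) (α : Module.Dual ℂ H) : Submodule ℂ L where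
  carrier := {x | ∀ h : H, ⁅(h : L), x⁆ = α h • x}
  add_mem' := by
    intro a b ha hb
    intro h
    rw [lie_add, ha h, hb h, smul_add]
  zero_mem' := by intro h; simp
  smul_mem' := by
    intro c x hx
    intro h
    rw [lie_smul, hx h, smul_comm]

/-- The span of all brackets `[x, y]`, `x ∈ A`, `y ∈ B`. -/
def bracketSpan (A B : Submodule ℂ L) : Submodule ℂ L :=
  Submodule.span ℂ {z | ∃ x ∈ A, ∃ y ∈ B, z = ⁅x, y⁆}

/-- The set of roots of `(L, H)`. -/
def rootSet' (H : LieSubalgebra ℂ L) : Set (Module.Dual ℂ H) :=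
  {α | rootSpace' H α ≠ ⊥}

/-- Axioms (A1)–(A5) of an extended affine Lie algebra `(L, B, H)`; `t α` is the
element of `H` representing `α ∈ 𝓗*` via the form. -/
structure IsEALA (B : L →ₗ[ℂ] L →ₗ[ℂ] ℂ) (H : LieSubalgebra ℂ L)
    (t : Module.Dual ℂ H → L) : Prop where
  symm : ∀ x y, B x y = B y x
  invariant : ∀ x y z, B ⁅x, y⁆ z = B x ⁅y, z⁆
  nondeg : ∀ x, (∀ y, B x y = 0) → x = 0
  fd : FiniteDimensional ℂ H
  t_mem : ∀ α, t α ∈ H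
  t_spec : ∀ (α : Module.Dual ℂ H) (h : H), α h = B (h : L) (t α)
  /-- (A2): root space decomposition with respect to `H`, with `L₀ = H`. -/
  decomp : (⨆ α : Module.Dual ℂ H, rootSpace' H α) = ⊤
  zeroRoot : rootSpace' H (0 : Module.Dual ℂ H) = H.toSubmodule
  /-- (A3): non-isotropic root vectors act locally ad-nilpotently. -/
  adNilpotent : ∀ α ∈ rootSet' H, B (t α) (t α) ≠ 0 →
    ∀ x ∈ rootSpace' H α, ∀ y : L, ∃ n : ℕ, ((LieAlgebra.ad ℂ L x) ^ n) y = 0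
  /-- (A4): the `ℤ`-span of the roots is free of finite rank. -/
  rootsFree : ∃ (n : ℕ) (b : Fin n → Module.Dual ℂ H),
      AddSubgroup.closure (rootSet' H) = AddSubgroup.closure (Set.range b) ∧
      ∀ c : Fin n → ℤ, (∑ i, c i • b i) = 0 → ∀ i, c i = 0
  /-- (A5)(a): the non-isotropic roots are indecomposable. -/
  irred : ¬ ∃ A C : Set (Module.Dual ℂ H), A.Nonempty ∧ C.Nonempty ∧
      Disjoint A C ∧
      A ∪ C = {α ∈ rootSet' H | B (t α) (t α) ≠ 0} ∧
      ∀ a ∈ A, ∀ c ∈ C, B (t a) (t c) = 0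
  /-- (A5)(b): the isotropic roots are non-isolated. -/
  nonisolated : ∀ δ ∈ rootSet' H, B (t δ) (t δ) = 0 →
      ∃ α ∈ rootSet' H, ∃ β ∈ rootSet' H, B (t α) (t α) ≠ 0 ∧
        B (t β) (t β) ≠ 0 ∧ δ = α - β

/-- The non-isotropic roots. -/
def RxSet (B : L →ₗ[ℂ] L →ₗ[ℂ] ℂ) (H : LieSubalgebra ℂ L)
    (t : Module.Dual ℂ H → L) : Set (Module.Dual ℂ H) :=
  {α ∈ rootSet' H | B (t α) (t α) ≠ 0}

/-- The isotropic roots. -/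
def R0Set (B : L →ₗ[ℂ] L →ₗ[ℂ] ℂ) (H : LieSubalgebra ℂ L)
    (t : Module.Dual ℂ H → L) : Set (Module.Dual ℂ H) :=
  {α ∈ rootSet' H | B (t α) (t α) = 0}

/-- The core: the subalgebra generated by the non-isotropic root spaces. -/
def coreOf (B : L →ₗ[ℂ] L →ₗ[ℂ] ℂ) (H : LieSubalgebra ℂ L)
    (t : Module.Dual ℂ H → L) : LieSubalgebra ℂ L :=
  LieSubalgebra.lieSpan ℂ L (⋃ α ∈ RxSet B H t, (rootSpace' H α : Set L))

/-- Tameness: `(core)ᗮ ⊆ core`. -/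
def IsTameEALA (B : L →ₗ[ℂ] L →ₗ[ℂ] ℂ) (H : LieSubalgebra ℂ L)
    (t : Module.Dual ℂ H → L) : Prop :=
  ∀ x : L, (∀ y ∈ coreOf B H t, B x y = 0) → x ∈ coreOf B H t

/-!
Normalise root vectors `e ∈ 𝓛_α`, `f ∈ 𝓛_{-α}` to an `sl₂`-triple `(h, e, f)`; by (A3), `ad e` is
locally nilpotent. If the pairing vanished, invariance would make `[f, [f, y]] ∈ 𝓛_{-(α+σ)}`
orthogonal to the one-dimensional `𝓛_{α+σ}` for `y ∈ 𝓛_{α-σ}`, hence zero, and symmetrically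
`[f, [f, x]] = 0` for `x ∈ 𝓛_{α+σ}`. In an `sl₂`-module on which `e` is locally nilpotent, a
nonzero weight vector killed by `f²` has weight in `{1, 0, -1, …}`; but the weights of `y` and `x`
are `2 - σ(h)` and `2 + σ(h)`, which cannot both be at most `1`.
-/

open LieModule

namespace IsSl2Triple

variable {R L M : Type*} [CommRing R] [LieRing L] [LieAlgebra R L]
  [AddCommGroup M] [Module R M] [LieRingModule L M] [LieModule R L M]
  {h e f : L} {m : M} {μ : R}

lemma lie_f_pow_succ_toEnd_e (t : IsSl2Triple h e f) (hm : ⁅h, m⁆ = μ • m) (n : ℕ) :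
    ⁅f, (toEnd R L M e ^ (n + 1)) m⁆ =
      (toEnd R L M e ^ (n + 1)) ⁅f, m⁆ - ((n + 1) * (μ + n)) • (toEnd R L M e ^ n) m := by
  induction n with
  | zero =>
    simp only [zero_add, pow_one, toEnd_apply_apply, Nat.cast_zero, add_zero, one_mul, pow_zero,
      Module.End.one_apply, leibniz_lie e f m, t.lie_e_f, hm]
    abel
  | succ n ih =>
    have hfe : ⁅f, ⁅e, (toEnd R L M e ^ (n + 1)) m⁆⁆ =
        ⁅e, ⁅f, (toEnd R L M e ^ (n + 1)) m⁆⁆ - ⁅h, (toEnd R L M e ^ (n + 1)) m⁆ := by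
      rw [leibniz_lie e f, t.lie_e_f]
      abel
    rw [pow_succ' _ (n + 1)]
    simp only [Module.End.mul_apply, toEnd_apply_apply]
    rw [hfe, lie_h_pow_toEnd_e t hm, ih, lie_sub, lie_smul, lie_e_pow_toEnd_e, lie_e_pow_toEnd_e]
    push_cast
    module

variable [IsDomain R] [CharZero R] [Module.IsTorsionFree R M]

lemma exists_nat_eq_neg_of_lie_e_lie_f_eq_zero (t : IsSl2Triple h e f) (hm0 : m ≠ 0)
    (hm : ⁅h, m⁆ = μ • m) (hefm : ⁅e, ⁅f, m⁆⁆ = 0)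
    (hnil : ∃ k, (toEnd R L M e ^ k) m = 0) :
    ∃ n : ℕ, μ = -n ∧ (toEnd R L M e ^ (n + 1)) m = 0 := by
  obtain ⟨n, hn, hn1⟩ := Nat.exists_not_and_succ_of_not_zero_of_exists (by simpa using hm0) hnil
  refine ⟨n, ?_, hn1⟩
  have key := t.lie_f_pow_succ_toEnd_e hm n
  rw [hn1, lie_zero, pow_succ, Module.End.mul_apply, toEnd_apply_apply, hefm, map_zero,
    zero_sub, eq_comm, neg_eq_zero, smul_eq_zero_iff_left hn, mul_eq_zero] at key
  exact eq_neg_of_add_eq_zero_left (key.resolve_left (Nat.cast_add_one_ne_zero n))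

lemma exists_nat_add_eq_one_of_lie_f_lie_f_eq_zero (t : IsSl2Triple h e f) (hm0 : m ≠ 0)
    (hm : ⁅h, m⁆ = μ • m) (hffm : ⁅f, ⁅f, m⁆⁆ = 0)
    (hnil : ∀ x : M, ∃ k, (toEnd R L M e ^ k) x = 0) :
    ∃ n : ℕ, μ + n = 1 := by
  by_cases hfm : ⁅f, m⁆ = 0
  · obtain ⟨n, hn, -⟩ :=
      t.exists_nat_eq_neg_of_lie_e_lie_f_eq_zero hm0 hm (by rw [hfm, lie_zero]) (hnil m)
    exact ⟨n + 1, by rw [hn]; push_cast; ring⟩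
  have hhfm : ⁅h, ⁅f, m⁆⁆ = (μ - 2) • ⁅f, m⁆ := by
    rw [leibniz_lie, t.lie_lie_smul_f R, hm, neg_lie, smul_lie, lie_smul]
    module
  obtain ⟨n, hn, hn1⟩ := t.exists_nat_eq_neg_of_lie_e_lie_f_eq_zero hfm hhfm
    (by rw [hffm, lie_zero]) (hnil _)
  obtain _ | n := n
  · -- `⁅f, m⁆` has weight `0`, so `e` kills it and `m` would be a lowest weight vector of weight `2`
    obtain ⟨k, hk, -⟩ := t.exists_nat_eq_neg_of_lie_e_lie_f_eq_zero hm0 hm (by simpa using hn1)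
      (hnil m)
    have : ((k + 2 : ℕ) : R) = 0 := by push_cast; linear_combination hk - hn
    exact absurd (Nat.cast_eq_zero.mp this) (by omega)
  · exact ⟨n, by push_cast at hn; linear_combination hn⟩

end IsSl2Triple

section RootSpace

variable {H : LieSubalgebra ℂ L}

lemma lie_mem_rootSpace' {ν μ : Module.Dual ℂ H} {x y : L}
    (hx : x ∈ rootSpace' H ν) (hy : y ∈ rootSpace' H μ) :
    ⁅x, y⁆ ∈ rootSpace' H (ν + μ) := by
  intro h
  rw [leibniz_lie, hx h, hy h, smul_lie, lie_smul, LinearMap.add_apply, add_smul]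

lemma isSl2Triple_of_mem_rootSpace' {α : Module.Dual ℂ H} {e f : L} {h : H}
    (he : e ∈ rootSpace' H α) (hf : f ∈ rootSpace' H (-α)) (hef : ⁅e, f⁆ = h)
    (hαh : α h = 2) : IsSl2Triple (h : L) e f where
  h_ne_zero := fun h0 ↦ by simp [show h = 0 from Subtype.ext h0] at hαh
  lie_e_f := hef
  lie_h_e_nsmul := by rw [he h, hαh, ofNat_smul_eq_nsmul]
  lie_h_f_nsmul := by rw [hf h, LinearMap.neg_apply, hαh, neg_smul, ofNat_smul_eq_nsmul]

end RootSpace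

namespace IsEALA

variable {B : L →ₗ[ℂ] L →ₗ[ℂ] ℂ} {H : LieSubalgebra ℂ L} {t : Module.Dual ℂ H → L}

lemma form_eq_zero_of_add_ne_zero (hE : IsEALA B H t) {ν μ : Module.Dual ℂ H} {x y : L}
    (hx : x ∈ rootSpace' H ν) (hy : y ∈ rootSpace' H μ) (hνμ : ν + μ ≠ 0) :
    B x y = 0 := by
  obtain ⟨h, hh⟩ := DFunLike.ne_iff.mp hνμ
  have hinv := hE.invariant x h y
  rw [← lie_skew, hx h, hy h, map_neg, map_smul, map_smul] at hinv
  have : (ν h + μ h) * B x y = 0 := by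
    simp only [LinearMap.neg_apply, LinearMap.smul_apply, smul_eq_mul] at hinv
    linear_combination -hinv
  exact (mul_eq_zero.mp this).resolve_left (by simpa using hh)

lemma eq_zero_of_forall_form_rootSpace_eq_zero (hE : IsEALA B H t) {x : L}
    (hx : ∀ μ, ∀ y ∈ rootSpace' H μ, B x y = 0) : x = 0 := by
  refine hE.nondeg x fun y ↦ ?_
  have hy : y ∈ ⨆ μ, rootSpace' H μ := hE.decomp ▸ Submodule.mem_top
  exact Submodule.iSup_induction (motive := fun z ↦ B x z = 0) _ hy hx (map_zero _)
    fun y z hy hz ↦ by rw [map_add, hy, hz, add_zero]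

lemma eq_zero_of_forall_form_rootSpace_neg_eq_zero (hE : IsEALA B H t) {ν : Module.Dual ℂ H}
    {x : L} (hx : x ∈ rootSpace' H ν) (hx' : ∀ y ∈ rootSpace' H (-ν), B x y = 0) : x = 0 := by
  refine hE.eq_zero_of_forall_form_rootSpace_eq_zero fun μ y hy ↦ ?_
  by_cases hνμ : ν + μ = 0
  · exact hx' y (neg_eq_of_add_eq_zero_right hνμ ▸ hy)
  · exact hE.form_eq_zero_of_add_ne_zero hx hy hνμ

lemma exists_form_ne_zero (hE : IsEALA B H t) {ν : Module.Dual ℂ H} {x : L}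
    (hx : x ∈ rootSpace' H ν) (hx0 : x ≠ 0) : ∃ y ∈ rootSpace' H (-ν), B x y ≠ 0 := by
  by_contra! h
  exact hx0 (hE.eq_zero_of_forall_form_rootSpace_neg_eq_zero hx h)

lemma lie_eq_form_smul_t (hE : IsEALA B H t) {ν : Module.Dual ℂ H} {e f : L}
    (he : e ∈ rootSpace' H ν) (hf : f ∈ rootSpace' H (-ν)) : ⁅e, f⁆ = B e f • t ν := by
  have hH : ∀ {x}, x ∈ rootSpace' H 0 ↔ x ∈ H := by rw [hE.zeroRoot]; rfl
  have hmem : ⁅e, f⁆ - B e f • t ν ∈ rootSpace' H 0 := by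
    refine sub_mem ?_ (Submodule.smul_mem _ _ (hH.mpr (hE.t_mem ν)))
    simpa using lie_mem_rootSpace' he hf
  refine sub_eq_zero.mp (hE.eq_zero_of_forall_form_rootSpace_neg_eq_zero hmem fun y hy ↦ ?_)
  rw [neg_zero] at hy
  have hfy : ⁅f, y⁆ = ν ⟨y, hH.mp hy⟩ • f := by
    rw [← lie_skew, hf ⟨y, hH.mp hy⟩, LinearMap.neg_apply, neg_smul, neg_neg]
  have hty : B y (t ν) = ν ⟨y, hH.mp hy⟩ := (hE.t_spec ν ⟨y, hH.mp hy⟩).symm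
  rw [map_sub, LinearMap.sub_apply, map_smul, LinearMap.smul_apply, hE.invariant, hfy, map_smul,
    hE.symm (t ν), hty, smul_eq_mul, smul_eq_mul, mul_comm, sub_self]

lemma exists_isSl2Triple (hE : IsEALA B H t) {α : Module.Dual ℂ H} (hα : B (t α) (t α) ≠ 0)
    {e : L} (he : e ∈ rootSpace' H α) (he0 : e ≠ 0) :
    ∃ f ∈ rootSpace' H (-α), ∃ h : H, α h = 2 ∧ IsSl2Triple (h : L) e f := by
  obtain ⟨f₀, hf₀, hef₀⟩ := hE.exists_form_ne_zero he he0
  set f := (2 / (B e f₀ * B (t α) (t α))) • f₀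
  have hf : f ∈ rootSpace' H (-α) := Submodule.smul_mem _ _ hf₀
  have hef : ⁅e, f⁆ = (2 / B (t α) (t α)) • t α := by
    rw [hE.lie_eq_form_smul_t he hf, map_smul, smul_eq_mul]
    field_simp
  have hefH : ⁅e, f⁆ ∈ H := hef ▸ H.smul_mem _ (hE.t_mem α)
  have hαh : α ⟨_, hefH⟩ = 2 := by
    rw [hE.t_spec]
    change B ⁅e, f⁆ (t α) = 2
    rw [hef, map_smul, LinearMap.smul_apply, smul_eq_mul]
    field_simp
  exact ⟨f, hf, _, hαh, isSl2Triple_of_mem_rootSpace' he hf rfl hαh⟩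

lemma lie_lie_eq_zero_of_form_eq_zero (hE : IsEALA B H t) {α β γ : Module.Dual ℂ H}
    (hβ : Module.finrank ℂ (rootSpace' H β) = 1) {x y f : L} (hx : x ∈ rootSpace' H β)
    (hx0 : x ≠ 0) (hy : y ∈ rootSpace' H γ) (hf : f ∈ rootSpace' H (-α))
    (hβγ : β + γ = α + α) (hxy : B ⁅x, f⁆ ⁅y, f⁆ = 0) : ⁅f, ⁅f, y⁆⁆ = 0 := by
  have hmem : ⁅f, ⁅f, y⁆⁆ ∈ rootSpace' H (-β) := by
    convert lie_mem_rootSpace' hf (lie_mem_rootSpace' hf hy) using 2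
    linear_combination (norm := module) -hβγ
  refine hE.eq_zero_of_forall_form_rootSpace_neg_eq_zero hmem fun z hz ↦ ?_
  rw [neg_neg] at hz
  obtain ⟨c, hc⟩ := (finrank_eq_one_iff_of_nonzero' ⟨x, hx⟩ (by simpa using hx0)).mp hβ ⟨z, hz⟩
  have hzx : z = c • x := by simpa using (congrArg Subtype.val hc).symm
  rw [hzx, map_smul, hE.symm, ← lie_skew f y, lie_neg, map_neg, ← hE.invariant, hxy]
  simp

end IsEALA

theorem stmt_9_general {L : Type*} [LieRing L] [LieAlgebra ℂ L]
    (B : L →ₗ[ℂ] L →ₗ[ℂ] ℂ) (H : LieSubalgebra ℂ L)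
    (t : Module.Dual ℂ H → L)
    (hE : IsEALA B H t)
    (h1dim : ∀ β ∈ RxSet B H t, Module.finrank ℂ (rootSpace' H β) = 1)
    (σa α : Module.Dual ℂ H)
    (hα : α ∈ RxSet B H t)
    (h1 : α + σa ∈ RxSet B H t) (h2 : α - σa ∈ RxSet B H t) :
    ∃ x ∈ bracketSpan (rootSpace' H (α + σa)) (rootSpace' H (-α)),
      ∃ y ∈ bracketSpan (rootSpace' H (α - σa)) (rootSpace' H (-α)),
        B x y ≠ 0 := by
  obtain ⟨e, he, he0⟩ := (Submodule.ne_bot_iff _).mp hα.1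
  obtain ⟨x, hx, hx0⟩ := (Submodule.ne_bot_iff _).mp h1.1
  obtain ⟨y, hy, hy0⟩ := (Submodule.ne_bot_iff _).mp h2.1
  obtain ⟨f, hf, h, hαh, ht⟩ := hE.exists_isSl2Triple hα.2 he he0
  have hnil : ∀ z, ∃ n, (toEnd ℂ L L e ^ n) z = 0 :=
    hE.adNilpotent α hα.1 hα.2 e he
  refine ⟨⁅x, f⁆, Submodule.subset_span ⟨x, hx, f, hf, rfl⟩,
    ⁅y, f⁆, Submodule.subset_span ⟨y, hy, f, hf, rfl⟩, fun hxy ↦ ?_⟩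
  have hffy : ⁅f, ⁅f, y⁆⁆ = 0 :=
    hE.lie_lie_eq_zero_of_form_eq_zero (h1dim _ h1) hx hx0 hy hf (by abel) hxy
  have hffx : ⁅f, ⁅f, x⁆⁆ = 0 :=
    hE.lie_lie_eq_zero_of_form_eq_zero (h1dim _ h2) hy hy0 hx hf (by abel)
      (by rwa [hE.symm])
  obtain ⟨N, hN⟩ := ht.exists_nat_add_eq_one_of_lie_f_lie_f_eq_zero hy0 (hy h) hffy hnil
  obtain ⟨M, hM⟩ := ht.exists_nat_add_eq_one_of_lie_f_lie_f_eq_zero hx0 (hx h) hffx hnil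
  have : ((N + M + 2 : ℕ) : ℂ) = 0 := by
    simp only [LinearMap.add_apply, LinearMap.sub_apply] at hN hM
    push_cast
    linear_combination hN + hM - 2 * hαh
  exact absurd (Nat.cast_eq_zero.mp this) (by omega)

/-- for a tame EALA `L`, `σ ∈ R⁰` and `α ∈ R×` with
`α ± σ ∈ R×`, the form does not vanish on the pairing of
`[L_{α+σ}, L_{−α}]` and `[L_{α−σ}, L_{−α}]`. -/
theorem stmt_9 {L : Type*} [LieRing L] [LieAlgebra ℂ L]
    (B : L →ₗ[ℂ] L →ₗ[ℂ] ℂ) (H : LieSubalgebra ℂ L)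
    (t : Module.Dual ℂ H → L)
    (hE : IsEALA B H t) (htame : IsTameEALA B H t)
    (h1dim : ∀ β ∈ RxSet B H t, Module.finrank ℂ (rootSpace' H β) = 1)
    (σa α : Module.Dual ℂ H)
    (hσ : σa ∈ R0Set B H t) (hα : α ∈ RxSet B H t)
    (h1 : α + σa ∈ RxSet B H t) (h2 : α - σa ∈ RxSet B H t) :
    ∃ x ∈ bracketSpan (rootSpace' H (α + σa)) (rootSpace' H (-α)),
      ∃ y ∈ bracketSpan (rootSpace' H (α - σa)) (rootSpace' H (-α)),
        B x y ≠ 0 :=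
  stmt_9_general B H t hE h1dim σa α hα h1 h2
end
end

section
/- Let Ṙ be a reduced finite root system of rank ≥ 2 which is not simply laced (type B, C, F₄, or G₂). For every root α̇ ∈ Ṙ there exists β̇ ∈ Ṙ with β̇ ≠ ±α̇ such that α̇ + β̇ is a short root of Ṙ. -/
open Pointwise

noncomputable section

variable {V : Type*} [AddCommGroup V] [Module ℝ V]

/-- The set `R×` of non-isotropic elements of `R` (w.r.t. the form `B`). -/
def Rx (B : V →ₗ[ℝ] V →ₗ[ℝ] ℝ) (R : Set V) : Set V := {α ∈ R | B α α ≠ 0}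

/-- The set `R⁰` of isotropic elements of `R`. -/
def R0 (B : V →ₗ[ℝ] V →ₗ[ℝ] ℝ) (R : Set V) : Set V := {α ∈ R | B α α = 0}

/-- The reflection `w_α(β) = β - (β,α∨) α`. -/
def wrefl (B : V →ₗ[ℝ] V →ₗ[ℝ] ℝ) (α β : V) : V := β - (2 * B β α / B α α) • α

/-- The radical of the form `B` restricted to the subspace `W`. -/
def radicalIn (B : V →ₗ[ℝ] V →ₗ[ℝ] ℝ) (W : Submodule ℝ V) : Set V :=
  {v | v ∈ W ∧ ∀ w ∈ W, B v w = 0}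

/-- A nontrivial positive semidefinite symmetric bilinear form. -/
structure PSDForm (B : V →ₗ[ℝ] V →ₗ[ℝ] ℝ) : Prop where
  symm : ∀ x y, B x y = B y x
  psd : ∀ x, 0 ≤ B x x
  nontrivial : ∃ x, B x x ≠ 0

/-- Axioms (R1)–(R5) of a (reduced) extended affine root system `R`
in the subspace `W` of `V`. -/
structure EARSOn (B : V →ₗ[ℝ] V →ₗ[ℝ] ℝ) (W : Submodule ℝ V) (R : Set V) : Prop where
  subset : R ⊆ (W : Set V)
  /-- (R1): the additive group generated by `R` is a full lattice in `W`. -/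
  lattice : ∃ (n : ℕ) (b : Fin n → V), LinearIndependent ℝ b ∧
      Submodule.span ℝ (Set.range b) = W ∧
      AddSubgroup.closure R = AddSubgroup.closure (Set.range b)
  /-- (R2): integrality of Cartan numbers. -/
  integrality : ∀ α ∈ Rx B R, ∀ β ∈ Rx B R, ∃ n : ℤ, 2 * B β α = (n : ℝ) * B α α
  /-- (R3): `R` is stable under the reflections in its non-isotropic elements. -/
  reflectMem : ∀ α ∈ Rx B R, ∀ β ∈ R, wrefl B α β ∈ R
  /-- (R4): `R⁰ = W⁰ ∩ (R× − R×)`. -/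
  isotropicEq : R0 B R = radicalIn B W ∩ {x | ∃ α ∈ Rx B R, ∃ β ∈ Rx B R, x = α - β}
  /-- (R5): `R` is reduced. -/
  reduced : ∀ α ∈ Rx B R, (2 : ℝ) • α ∉ R

/-- `R` is irreducible (connected): `R×` cannot be written as a union of two
nonempty orthogonal subsets. -/
def EARSIrred (B : V →ₗ[ℝ] V →ₗ[ℝ] ℝ) (R : Set V) : Prop :=
  ¬ ∃ A C : Set V, A.Nonempty ∧ C.Nonempty ∧ Disjoint A C ∧ A ∪ C = Rx B R ∧
      ∀ a ∈ A, ∀ c ∈ C, B a c = 0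

/-- The short roots of a finite root system `Rdot`: the non-isotropic roots of
minimal length. -/
def shortRoots (B : V →ₗ[ℝ] V →ₗ[ℝ] ℝ) (Rdot : Set V) : Set V :=
  {γ ∈ Rdot | B γ γ ≠ 0 ∧ ∀ γ' ∈ Rdot, B γ' γ' ≠ 0 → B γ γ ≤ B γ' γ'}

/-- The long roots: the non-isotropic roots which are not short. -/
def longRoots (B : V →ₗ[ℝ] V →ₗ[ℝ] ℝ) (Rdot : Set V) : Set V :=
  {γ ∈ Rdot | B γ γ ≠ 0 ∧ γ ∉ shortRoots B Rdot}

/-- A description `R = R(Ṙ, S, L) = (S+S) ∪ (Ṙ_sh + S) ∪ (Ṙ_lg + L)` of a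
reduced EARS `R`, with `Ṙ` a finite root system and `S`, `L` (translated)
semilattices in the radical. -/
structure EARSDesc (B : V →ₗ[ℝ] V →ₗ[ℝ] ℝ) (R : Set V) where
  Rdot : Set V
  S : Set V
  L : Set V
  Rdot_fin : Rdot.Finite
  Rdot_zero : (0 : V) ∈ Rdot
  Rdot_anis : ∀ γ ∈ Rdot, γ ≠ 0 → B γ γ ≠ 0
  S_rad : ∀ s ∈ S, ∀ w, B s w = 0
  L_rad : ∀ l ∈ L, ∀ w, B l w = 0
  S_zero : (0 : V) ∈ S
  S_neg : ∀ s ∈ S, -s ∈ S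
  S_semilattice : ∀ s ∈ S, ∀ s' ∈ S, s + s' + s' ∈ S
  L_zero : (0 : V) ∈ L
  L_neg : ∀ l ∈ L, -l ∈ L
  L_semilattice : ∀ l ∈ L, ∀ l' ∈ L, l + l' + l' ∈ L
  descr : R = (S + S) ∪ (shortRoots B Rdot + S) ∪ (longRoots B Rdot + L)

/-- A reduced finite root system `Rd` (not containing `0`) in `V`, with the
form `B` positive definite on the roots. -/
structure FiniteRootSystem (B : V →ₗ[ℝ] V →ₗ[ℝ] ℝ) (Rd : Set V) : Prop where
  finite : Rd.Finite
  not_zero : (0 : V) ∉ Rd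
  posdef : ∀ γ ∈ Rd, 0 < B γ γ
  reflectMem : ∀ α ∈ Rd, ∀ β ∈ Rd, wrefl B α β ∈ Rd
  integrality : ∀ α ∈ Rd, ∀ β ∈ Rd, ∃ n : ℤ, 2 * B β α = (n : ℝ) * B α α
  reduced : ∀ α ∈ Rd, (2 : ℝ) • α ∉ Rd

/-- Irreducibility of a finite root system. -/
def FRSIrred (B : V →ₗ[ℝ] V →ₗ[ℝ] ℝ) (Rd : Set V) : Prop :=
  ¬ ∃ A C : Set V, A.Nonempty ∧ C.Nonempty ∧ Disjoint A C ∧ A ∪ C = Rd ∧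
      ∀ a ∈ A, ∀ c ∈ C, B a c = 0

namespace Stmt16Aux
variable {B : V →ₗ[ℝ] V →ₗ[ℝ] ℝ} {Rd : Set V}

lemma cs (hB : PSDForm B) (x y : V) : (B x y)^2 ≤ B x x * B y y := by
  have h : ∀ t : ℝ, 0 ≤ B y y * (t * t) + (2 * B x y) * t + B x x := by
    intro t
    have h1 := hB.psd (x + t • y)
    have h2 := hB.symm x y
    simp only [map_add, map_smul, LinearMap.add_apply, LinearMap.smul_apply,
      smul_eq_mul] at h1
    have e : B x x + t * B y x + t * (B x y + t * B y y)
        = B y y * (t * t) + 2 * B x y * t + B x x := by rw [h2]; ring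
    rw [e] at h1
    exact h1
  have h2 := discrim_le_zero h
  rw [discrim] at h2
  nlinarith

lemma rad_of_isotropic (hB : PSDForm B) {x : V} (hx : B x x = 0) (y : V) :
    B x y = 0 := by
  have h := cs hB x y
  have h2 := hB.psd y
  nlinarith [sq_nonneg (B x y)]

lemma expand_sub (hB : PSDForm B) (x y : V) :
    B (x - y) (x - y) = B x x - 2 * B x y + B y y := by
  have h := hB.symm x y
  simp only [map_sub, LinearMap.sub_apply]
  ring_nf
  linarith

lemma neg_mem (hRd : FiniteRootSystem B Rd) {α : V} (hα : α ∈ Rd) : -α ∈ Rd := by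
  have h := hRd.reflectMem α hα α hα
  have h0 : B α α ≠ 0 := (hRd.posdef α hα).ne'
  rw [wrefl] at h
  have h2 : 2 * B α α / B α α = 2 := by field_simp
  rw [h2] at h
  convert h using 1
  module

lemma mem_short_iff {γ : V} : γ ∈ shortRoots B Rd ↔
    γ ∈ Rd ∧ B γ γ ≠ 0 ∧ ∀ γ' ∈ Rd, B γ' γ' ≠ 0 → B γ γ ≤ B γ' γ' := Iff.rfl

lemma short_neg (hB : PSDForm B) (hRd : FiniteRootSystem B Rd) {γ : V}
    (h : γ ∈ shortRoots B Rd) : -γ ∈ shortRoots B Rd := by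
  obtain ⟨h1, h2, h3⟩ := h
  have he : B (-γ) (-γ) = B γ γ := by simp
  exact ⟨neg_mem hRd h1, by rw [he]; exact h2, fun γ' hγ' h' => he ▸ h3 γ' hγ' h'⟩

lemma exists_short (hRd : FiniteRootSystem B Rd) (hne : Rd.Nonempty) :
    ∃ γ, γ ∈ shortRoots B Rd := by
  obtain ⟨γ, hγ, hmin⟩ := Set.exists_min_image Rd (fun x => B x x) hRd.finite hne
  exact ⟨γ, hγ, (hRd.posdef γ hγ).ne', fun γ' h _ => hmin γ' h⟩


lemma sub_mem (hB : PSDForm B) (hRd : FiniteRootSystem B Rd) {α β : V}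
    (hα : α ∈ Rd) (hβ : β ∈ Rd) (hpos : 0 < B α β) (hne : α ≠ β) :
    α - β ∈ Rd := by
  have haa : 0 < B α α := hRd.posdef α hα
  have hbb : 0 < B β β := hRd.posdef β hβ
  have hsymm : B β α = B α β := hB.symm β α
  obtain ⟨n, hn⟩ := hRd.integrality α hα β hβ   -- 2 * B β α = n * B α α
  obtain ⟨m, hm⟩ := hRd.integrality β hβ α hα   -- 2 * B α β = m * B β β
  have hn1 : 1 ≤ n := by
    have : (0:ℝ) < n * B α α := by rw [← hn, hsymm]; linarith
    have h0 : (0:ℝ) < n := by nlinarith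
    have : (0:ℤ) < n := by exact_mod_cast h0
    omega
  have hm1 : 1 ≤ m := by
    have : (0:ℝ) < m * B β β := by rw [← hm]; linarith
    have h0 : (0:ℝ) < m := by nlinarith
    have : (0:ℤ) < m := by exact_mod_cast h0
    omega
  by_cases hmcase : m = 1
  · -- w_β(α) = α - β
    have h := hRd.reflectMem β hβ α hα
    rw [wrefl] at h
    have hc : 2 * B α β / B β β = 1 := by
      rw [hm, hmcase]; push_cast; field_simp
    rw [hc, one_smul] at h
    exact h
  by_cases hncase : n = 1
  · have h := hRd.reflectMem α hα β hβ
    rw [wrefl] at h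
    have hc : 2 * B β α / B α α = 1 := by
      rw [hn, hncase]; push_cast; field_simp
    rw [hc, one_smul] at h
    have := neg_mem hRd h
    rw [neg_sub] at this
    exact this
  -- hard case: n, m ≥ 2
  exfalso
  have hn2 : 2 ≤ n := by omega
  have hm2 : 2 ≤ m := by omega
  have hcs := cs hB α β
  have hprod : (n:ℝ) * m * (B α α * B β β) = 4 * (B α β)^2 := by
    have : (2 * B β α) * (2 * B α β) = ((n:ℝ) * B α α) * ((m:ℝ) * B β β) := by
      rw [hn, hm]
    rw [hsymm] at this
    nlinarith [this]
  have hnm4 : (n:ℝ) * m ≤ 4 := by nlinarith [hcs, hprod, mul_pos haa hbb]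
  have hn2' : (2:ℝ) ≤ n := by exact_mod_cast hn2
  have hm2' : (2:ℝ) ≤ m := by exact_mod_cast hm2
  have hne2 : (n:ℝ) = 2 ∧ (m:ℝ) = 2 := by constructor <;> nlinarith
  have hab : B α β = B α α ∧ B α β = B β β := by
    constructor
    · rw [← hsymm] at *; nlinarith [hn, hne2.1]
    · nlinarith [hm, hne2.2]
  set δ := α - β with hδ
  have hδ0 : B δ δ = 0 := by
    rw [hδ, expand_sub hB]; nlinarith [hab.1, hab.2]
  have hδne : δ ≠ 0 := sub_ne_zero.mpr hne
  have hrad : ∀ y, B δ y = 0 := rad_of_isotropic hB hδ0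
  have hBαδ : B α δ = 0 := by rw [hB.symm]; exact hrad α
  -- the infinite family α - 2^k • δ
  have key : ∀ k : ℕ, α - ((2:ℝ)^k) • δ ∈ Rd := by
    intro k
    induction k with
    | zero =>
      simp only [pow_zero, one_smul]
      have e : α - δ = β := by rw [hδ]; abel
      rwa [e]
    | succ k ih =>
      set x := α - ((2:ℝ)^k) • δ with hx
      have hBxx : B x x = B α α := by
        rw [hx]
        simp only [map_sub, map_smul, LinearMap.sub_apply, LinearMap.smul_apply,
          smul_eq_mul, hBαδ, hrad α, hrad δ]
        ring
      have hBax : B (-α) x = - B α α := by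
        rw [hx]
        simp only [map_neg, map_sub, map_smul, LinearMap.neg_apply,
          LinearMap.sub_apply, LinearMap.smul_apply, smul_eq_mul, hBαδ]
        ring
      have h := hRd.reflectMem x ih (-α) (neg_mem hRd hα)
      rw [wrefl] at h
      have hc : 2 * B (-α) x / B x x = -2 := by
        rw [hBax, hBxx]; field_simp
      rw [hc] at h
      have he : -α - (-2 : ℝ) • x = α - ((2:ℝ)^(k+1)) • δ := by
        rw [hx, pow_succ]
        module
      rwa [he] at h
  have hinj : Function.Injective (fun k : ℕ => α - ((2:ℝ)^k) • δ) := by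
    intro j k hjk
    simp only [sub_right_inj] at hjk
    have : ((2:ℝ)^j - (2:ℝ)^k) • δ = 0 := by
      rw [sub_smul, hjk, sub_self]
    rcases smul_eq_zero.mp this with h | h
    · have : (2:ℝ)^j = (2:ℝ)^k := by linarith [sub_eq_zero.mp h]
      by_contra hne'
      rcases Nat.lt_or_ge j k with h'|h'
      · have h2 := pow_lt_pow_right₀ (by norm_num : (1:ℝ) < 2) h'
        linarith
      · have h'' : k < j := by omega
        have h2 := pow_lt_pow_right₀ (by norm_num : (1:ℝ) < 2) h''
        linarith
    · exact absurd h hδne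
  exact (Set.infinite_of_injective_forall_mem hinj key) hRd.finite

lemma short_sub (hB : PSDForm B) (hRd : FiniteRootSystem B Rd) {c γ : V}
    (hc : c ∈ Rd) (hγ : γ ∈ shortRoots B Rd) (hpos : 0 < B c γ) (hne : c ≠ γ) :
    c - γ ∈ shortRoots B Rd := by
  obtain ⟨hγRd, hγ0, hγmin⟩ := hγ
  have hsub : c - γ ∈ Rd := sub_mem hB hRd hc hγRd hpos hne
  have hcc := hRd.posdef c hc
  obtain ⟨m, hm⟩ := hRd.integrality c hc γ hγRd   -- 2 * B γ c = m * B c c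
  have hsymm : B γ c = B c γ := hB.symm γ c
  have hm1 : (1:ℝ) ≤ m := by
    have h1 : (0:ℝ) < m * B c c := by rw [← hm, hsymm]; linarith
    have h0 : (0:ℝ) < m := by nlinarith
    have h2 : (0:ℤ) < m := by exact_mod_cast h0
    exact_mod_cast h2
  have hexp : B (c-γ) (c-γ) = B c c - 2 * B c γ + B γ γ := expand_sub hB c γ
  have hle : B (c-γ) (c-γ) ≤ B γ γ := by
    rw [hexp, ← hsymm]
    nlinarith [hm, hm1, hcc]
  have hge : B γ γ ≤ B (c-γ) (c-γ) :=
    hγmin _ hsub (hRd.posdef _ hsub).ne'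
  have heq : B (c-γ) (c-γ) = B γ γ := le_antisymm hle hge
  exact ⟨hsub, by rw [heq]; exact hγ0, fun γ' h1 h2 => heq ▸ hγmin γ' h1 h2⟩

lemma exists_short_nonorth (hB : PSDForm B) (hRd : FiniteRootSystem B Rd)
    (hirr : ¬ ∃ A C : Set V, A.Nonempty ∧ C.Nonempty ∧ Disjoint A C ∧ A ∪ C = Rd ∧
      ∀ a ∈ A, ∀ c ∈ C, B a c = 0)
    {α : V} (hα : α ∈ Rd) : ∃ γ ∈ shortRoots B Rd, B α γ ≠ 0 := by
  by_contra hcon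
  push_neg at hcon
  apply hirr
  set A : Set V := {x ∈ Rd | ∀ γ ∈ shortRoots B Rd, B x γ = 0} with hA
  obtain ⟨γ₀, hγ₀⟩ := exists_short hRd ⟨α, hα⟩
  refine ⟨A, Rd \ A, ⟨α, hα, hcon⟩, ⟨γ₀, hγ₀.1, ?_⟩,
    Set.disjoint_sdiff_right, Set.union_diff_cancel (Set.sep_subset _ _), ?_⟩
  · intro hmem
    exact hγ₀.2.1 (hmem.2 γ₀ hγ₀)
  · rintro a ⟨haRd, haorth⟩ c hc
    by_contra hac
    have hcA : c ∉ A := hc.2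
    have : ∃ γ ∈ shortRoots B Rd, B c γ ≠ 0 := by
      by_contra hcon2
      push_neg at hcon2
      exact hcA ⟨hc.1, hcon2⟩
    obtain ⟨γ, hγs, hγne⟩ := this
    -- WLOG positive
    obtain ⟨γ, hγs, hγpos⟩ : ∃ γ ∈ shortRoots B Rd, 0 < B c γ := by
      rcases hγne.lt_or_gt with h | h
      · exact ⟨-γ, short_neg hB hRd hγs, by simpa using h⟩
      · exact ⟨γ, hγs, h⟩
    by_cases hcγ : c = γ
    · exact hac (haorth c (hcγ ▸ hγs))
    · have hσ := short_sub hB hRd hc.1 hγs hγpos hcγ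
      have h1 := haorth _ hσ
      have h2 := haorth _ hγs
      simp only [map_sub, LinearMap.sub_apply] at h1
      apply hac
      linarith [h1, h2]

lemma exists_nonorth [FiniteDimensional ℝ V] (hRd : FiniteRootSystem B Rd)
    (hirr : ¬ ∃ A C : Set V, A.Nonempty ∧ C.Nonempty ∧ Disjoint A C ∧ A ∪ C = Rd ∧
      ∀ a ∈ A, ∀ c ∈ C, B a c = 0)
    (hrank : 2 ≤ Module.finrank ℝ (Submodule.span ℝ Rd))
    {α : V} (hα : α ∈ Rd) : ∃ c ∈ Rd, c ≠ α ∧ c ≠ -α ∧ B α c ≠ 0 := by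
  by_contra hcon
  push_neg at hcon
  apply hirr
  have hαne : α ≠ 0 := fun h => hRd.not_zero (h ▸ hα)
  have hCne : ¬ (Rd ⊆ {α, -α}) := by
    intro hsub
    have h1 : Submodule.span ℝ Rd ≤ Submodule.span ℝ {α} := by
      rw [Submodule.span_le]
      intro x hx
      rcases hsub hx with rfl | rfl
      · exact Submodule.subset_span rfl
      · exact Submodule.neg_mem _ (Submodule.subset_span rfl)
    have h2 := Submodule.finrank_mono h1
    rw [finrank_span_singleton hαne] at h2
    omega
  rw [Set.not_subset] at hCne
  obtain ⟨c₀, hc₀, hc₀n⟩ := hCne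
  refine ⟨{α, -α} ∩ Rd, Rd \ {α, -α}, ⟨α, by simp, hα⟩, ⟨c₀, hc₀, hc₀n⟩,
    Set.disjoint_sdiff_right.mono_left Set.inter_subset_left, ?_, ?_⟩
  · rw [Set.inter_comm]
    exact Set.inter_union_diff Rd {α, -α}
  · rintro a ⟨ha1, _⟩ c ⟨hcRd, hcn⟩
    simp only [Set.mem_insert_iff, Set.mem_singleton_iff] at ha1 hcn
    push_neg at hcn
    have h0 := hcon c hcRd hcn.1 hcn.2
    rcases ha1 with rfl | rfl
    · exact h0
    · simp only [map_neg, LinearMap.neg_apply]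
      rw [h0, neg_zero]

end Stmt16Aux

/-- in a reduced irreducible finite root system of rank `≥ 2`
which is not simply laced, every root `α̇` admits a root `β̇ ≠ ±α̇` with
`α̇ + β̇` a short root. -/
theorem stmt_16 {V : Type*} [AddCommGroup V] [Module ℝ V] [FiniteDimensional ℝ V]
    (B : V →ₗ[ℝ] V →ₗ[ℝ] ℝ) (hB : PSDForm B) (Rd : Set V)
    (hRd : FiniteRootSystem B Rd) (hirr : FRSIrred B Rd)
    (hrank : 2 ≤ Module.finrank ℝ (Submodule.span ℝ Rd))
    (hnsl : ∃ γ ∈ Rd, ∃ γ' ∈ Rd, B γ γ ≠ B γ' γ') :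
    ∀ α ∈ Rd, ∃ β ∈ Rd, β ≠ α ∧ β ≠ -α ∧ α + β ∈ shortRoots B Rd := by

  classical
  intro α hα
  open Stmt16Aux in
  have haa : 0 < B α α := hRd.posdef α hα
  obtain ⟨γ1, hγ1s, hγ1ne⟩ := Stmt16Aux.exists_short_nonorth hB hRd hirr hα
  obtain ⟨γ, hγs, hγpos⟩ : ∃ γ ∈ shortRoots B Rd, 0 < B γ α := by
    rcases hγ1ne.lt_or_gt with h | h
    · refine ⟨-γ1, Stmt16Aux.short_neg hB hRd hγ1s, ?_⟩
      have : B (-γ1) α = -(B α γ1) := by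
        rw [hB.symm α γ1]; simp
      rw [this]; linarith
    · exact ⟨γ1, hγ1s, by rw [hB.symm γ1 α]; exact h⟩
  by_cases hgeorge : γ = α
  case neg =>
    -- γ ≠ α : take β = γ - α
    have hβ := Stmt16Aux.sub_mem hB hRd hγs.1 hα hγpos hgeorge
    refine ⟨γ - α, hβ, ?_, ?_, ?_⟩
    · intro h
      have hg : γ = (2:ℝ) • α := by
        have := sub_eq_iff_eq_add.mp h
        rw [this, two_smul]
      exact hRd.reduced α hα (hg ▸ hγs.1)
    · intro h
      have hg : γ = 0 := by
        have := sub_eq_iff_eq_add.mp h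
        rw [this]; abel
      exact hRd.not_zero (hg ▸ hγs.1)
    · have e : α + (γ - α) = γ := by abel
      rw [e]; exact hγs
  case pos =>
    subst hgeorge
    -- γ (= α) is short
    obtain ⟨c1, hc1, hc1a, hc1b, hc1o⟩ := Stmt16Aux.exists_nonorth hRd hirr hrank hα
    obtain ⟨c, hc, hcneα, hcnenα, hcpos⟩ :
        ∃ c ∈ Rd, c ≠ γ ∧ c ≠ -γ ∧ 0 < B c γ := by
      rcases hc1o.lt_or_gt with h | h
      · refine ⟨-c1, Stmt16Aux.neg_mem hRd hc1, ?_, ?_, ?_⟩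
        · intro he; exact hc1b (by rw [← he, neg_neg])
        · intro he; apply hc1a; have := congrArg Neg.neg he; simpa using this
        · have : B (-c1) γ = -(B γ c1) := by rw [hB.symm γ c1]; simp
          rw [this]; linarith
      · refine ⟨c1, hc1, hc1a, hc1b, by rw [hB.symm c1 γ]; exact h⟩
    have hσ : c - γ ∈ shortRoots B Rd := Stmt16Aux.short_sub hB hRd hc hγs hcpos hcneα
    have hσRd : c - γ ∈ Rd := hσ.1
    have hσ_ne_α : c - γ ≠ γ := by
      intro h
      have hg : c = (2:ℝ) • γ := by
        have := sub_eq_iff_eq_add.mp h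
        rw [this, two_smul]
      exact hRd.reduced γ hγs.1 (hg ▸ hc)
    have hσ_ne_nα : c - γ ≠ -γ := by
      intro h
      have hg : c = 0 := by
        have := sub_eq_iff_eq_add.mp h
        rw [this]; abel
      exact hRd.not_zero (hg ▸ hc)
    rcases lt_trichotomy (B (c - γ) γ) 0 with h | h | h
    · -- use -(c - γ)
      have hτs := Stmt16Aux.short_neg hB hRd hσ
      have hτpos : 0 < B (-(c - γ)) γ := by
        have : B (-(c - γ)) γ = -(B (c - γ) γ) := by simp
        rw [this]; linarith
      have hτneα : -(c - γ) ≠ γ := fun he => hσ_ne_nα (neg_eq_iff_eq_neg.mp he)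
      have hβ := Stmt16Aux.sub_mem hB hRd hτs.1 hγs.1 hτpos hτneα
      refine ⟨-(c - γ) - γ, hβ, ?_, ?_, ?_⟩
      · intro he
        have hg : -(c - γ) = (2:ℝ) • γ := by
          have := sub_eq_iff_eq_add.mp he
          rw [this, two_smul]
        exact hRd.reduced γ hγs.1 (hg ▸ hτs.1)
      · intro he
        have hg : c - γ = 0 := by
          have := sub_eq_iff_eq_add.mp he
          have h2 := congrArg Neg.neg this
          simp only [neg_neg] at h2
          rw [h2]; abel
        exact hRd.not_zero (hg ▸ hσRd)
      · have e : γ + (-(c - γ) - γ) = -(c - γ) := by abel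
        rw [e]; exact hτs
    · -- orthogonal case: reflection
      have hBcγ : B c γ = B γ γ := by
        have he : B (c - γ) γ = B c γ - B γ γ := by
          simp [map_sub, LinearMap.sub_apply]
        rw [he] at h; linarith
      have h2 := hRd.reflectMem γ hγs.1 c hc
      rw [wrefl] at h2
      have hgg : 0 < B γ γ := hRd.posdef γ hγs.1
      have hc2 : 2 * B c γ / B γ γ = 2 := by rw [hBcγ]; field_simp
      rw [hc2] at h2
      refine ⟨c - (2:ℝ) • γ, h2, ?_, ?_, ?_⟩
      · intro he
        have hcval : c = γ + (2:ℝ) • γ := sub_eq_iff_eq_add.mp he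
        have : B c γ = 3 * B γ γ := by
          rw [hcval]
          simp only [map_add, map_smul, LinearMap.add_apply, LinearMap.smul_apply,
            smul_eq_mul]
          ring
        rw [hBcγ] at this
        linarith
      · intro he
        apply hcneα
        have hcval : c = -γ + (2:ℝ) • γ := sub_eq_iff_eq_add.mp he
        rw [hcval, two_smul]; abel
      · have e : γ + (c - (2:ℝ) • γ) = c - γ := by
          rw [two_smul]; abel
        rw [e]; exact hσ
    · -- positive case
      have hβ := Stmt16Aux.sub_mem hB hRd hσRd hγs.1 h hσ_ne_α
      refine ⟨(c - γ) - γ, hβ, ?_, ?_, ?_⟩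
      · intro he
        have hg : c - γ = (2:ℝ) • γ := by
          have := sub_eq_iff_eq_add.mp he
          rw [this, two_smul]
        exact hRd.reduced γ hγs.1 (hg ▸ hσRd)
      · intro he
        have hg : c - γ = 0 := by
          have := sub_eq_iff_eq_add.mp he
          rw [this]; abel
        exact hRd.not_zero (hg ▸ hσRd)
      · have e : γ + ((c - γ) - γ) = c - γ := by abel
        rw [e]; exact hσ
end
end
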